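/- arXiv:1903.08110 — 2 statements merged into one kernel-verified Lean document; each statement's English description precedes it below -/
import Mathlib

section
/- Let d ≥ 1, T ≥ 1, let X ⊆ ℝ^d be nonempty with ℓ∞-diameter at most D, let α, β ≥ 0, η > 0, let f_1, …, f_T : X → ℝ and g_1, …, g_T : X → ℝ with g_1 = 0, and suppose g_t − f_t is L_t-Lipschitz with respect to the ℓ1 norm for each t. Let μ_η be the product probability measure on ℝ^d whose coordinates are i.i.d. exponential with parameter η. Suppose x_1, …, x_T : ℝ^d → X are measurable maps such that for μ_η-almost every σ and every t, x_t(σ) is an (α,β)-approximate minimizer over X of x ↦ Σ_{i=1}^{t−1} f_i(x) + g_t(x) − ⟨σ, x⟩, and suppose x̄_2, …, x̄_{T+1} : ℝ^d → X are measurable maps such that x̄_{t+1}(σ) is an exact minimizer over X of x ↦ Σ_{i=1}^{t} f_i(x) − ⟨σ, x⟩. Then E_{σ∼μ_η}[ Σ_{t=1}^T f_t(x_t(σ)) − inf_{x∈X} Σ_{t=1}^T f_t(x) ] ≤ Σ_{t=1}^T L_t · E_{σ∼μ_η}[ ‖x_t(σ) − x̄_{t+1}(σ)‖_1 ] + d(βT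 + D)/η + αT. -/
open MeasureTheory

noncomputable section

/-- The exponential distribution with rate `η`: density `η * exp (-η x)` on `[0, ∞)`,
so that `P (Z ≥ s) = exp (-η s)` for `s ≥ 0`. -/
def expoMeasure (η : ℝ) : Measure ℝ :=
  volume.withDensity fun x => ENNReal.ofReal (if 0 ≤ x then η * Real.exp (-(η * x)) else 0)

instance (η : ℝ) : SigmaFinite (expoMeasure η) := by
  unfold expoMeasure; infer_instance

/-- The product probability measure on `ℝ^d` whose coordinates are i.i.d. `Exp(η)`. -/
def expoProd (d : ℕ) (η : ℝ) : Measure (Fin d → ℝ) :=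
  Measure.pi fun _ => expoMeasure η

/-- Standard inner product on `ℝ^d`. -/
def dotp {d : ℕ} (σ x : Fin d → ℝ) : ℝ := ∑ i, σ i * x i

/-- ℓ1 norm on `ℝ^d`. -/
def l1 {d : ℕ} (x : Fin d → ℝ) : ℝ := ∑ i, |x i|

lemma expoMeasure_eq_expMeasure (η : ℝ) : expoMeasure η = ProbabilityTheory.expMeasure η := by
  rw [ProbabilityTheory.expMeasure, ProbabilityTheory.gammaMeasure, expoMeasure]
  congr 1
  ext x
  rw [← ProbabilityTheory.exponentialPDF_eq]
  rfl

lemma expoMeasure_prob {η : ℝ} (hη : 0 < η) : IsProbabilityMeasure (expoMeasure η) := by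
  rw [expoMeasure_eq_expMeasure]
  exact ProbabilityTheory.isProbabilityMeasure_expMeasure hη

lemma expoProd_prob {d : ℕ} {η : ℝ} (hη : 0 < η) : IsProbabilityMeasure (expoProd d η) := by
  have := expoMeasure_prob hη
  rw [expoProd]
  infer_instance

section density
open Real Set
open scoped ENNReal NNReal

variable {η : ℝ}

def expoDens (η : ℝ) (x : ℝ) : ℝ := if 0 ≤ x then η * Real.exp (-(η * x)) else 0

lemma expoDens_nonneg (hη : 0 < η) (x : ℝ) : 0 ≤ expoDens η x := by
  unfold expoDens; split <;> positivity

lemma expoDens_zero_of_nonpos (ha : a ≤ 0) : expoDens η a * |a| = 0 := by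
  rcases lt_or_eq_of_le ha with h1 | h1
  · simp [expoDens, not_le.mpr h1]
  · simp [h1]

lemma expoDens_meas : Measurable (expoDens η) :=
  Measurable.ite measurableSet_Ici (by fun_prop) measurable_const

lemma expoMeasure_eq_withDensity :
    expoMeasure η = volume.withDensity fun x => ((expoDens η x).toNNReal : ℝ≥0∞) := rfl

lemma integrable_expoDens_abs (hη : 0 < η) :
    Integrable (fun a : ℝ => expoDens η a * |a|) volume := by
  have h : (fun a : ℝ => expoDens η a * |a|) = (Ioi (0:ℝ)).indicator
      (fun a => expoDens η a * |a|) := by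
    funext a
    by_cases ha : a ∈ Ioi (0:ℝ)
    · rw [Set.indicator_of_mem ha]
    · rw [Set.indicator_of_notMem ha]
      exact expoDens_zero_of_nonpos (by simpa using ha)
  rw [h, integrable_indicator_iff measurableSet_Ioi]
  have h0 := (integrableOn_rpow_mul_exp_neg_mul_rpow (p := 1) (s := 1) (b := η)
    (by norm_num) zero_lt_one hη).const_mul η
  simp only [Real.rpow_one] at h0
  refine MeasureTheory.IntegrableOn.congr_fun h0 (fun a ha => ?_) measurableSet_Ioi
  simp only [mem_Ioi] at ha
  simp [expoDens, ha.le, abs_of_pos ha, neg_mul]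
  ring

lemma integrable_abs_expoMeasure (hη : 0 < η) :
    Integrable (fun a : ℝ => |a|) (expoMeasure η) := by
  rw [expoMeasure_eq_withDensity,
    integrable_withDensity_iff_integrable_smul expoDens_meas.real_toNNReal]
  apply (integrable_expoDens_abs hη).congr
  filter_upwards with a
  simp [NNReal.smul_def, Real.coe_toNNReal _ (expoDens_nonneg hη a)]

lemma integral_abs_expoMeasure (hη : 0 < η) :
    ∫ a, |a| ∂(expoMeasure η) = 1 / η := by
  rw [expoMeasure_eq_withDensity, integral_withDensity_eq_integral_smul expoDens_meas.real_toNNReal]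
  have h1 : ∫ a : ℝ, ((expoDens η a).toNNReal : ℝ≥0) • |a| = ∫ a : ℝ, expoDens η a * |a| := by
    congr 1; funext a
    simp [NNReal.smul_def, Real.coe_toNNReal _ (expoDens_nonneg hη a)]
  rw [h1]
  have h2 : ∫ a : ℝ, expoDens η a * |a| = ∫ a in Ioi (0:ℝ), expoDens η a * |a| := by
    rw [setIntegral_eq_integral_of_forall_compl_eq_zero]
    intro a ha
    exact expoDens_zero_of_nonpos (by simpa using ha)
  rw [h2]
  have h3 : ∫ a in Ioi (0:ℝ), expoDens η a * |a| =
      ∫ a in Ioi (0:ℝ), η * (a ^ ((2:ℝ)-1) * Real.exp (-(η * a))) := by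
    apply setIntegral_congr_fun measurableSet_Ioi
    intro a ha
    simp only [mem_Ioi] at ha
    norm_num
    simp [expoDens, ha.le, abs_of_pos ha]
    ring
  rw [h3, integral_const_mul, integral_rpow_mul_exp_neg_mul_Ioi (by norm_num) hη]
  rw [Real.Gamma_two]
  rw [show ((1:ℝ)/η) ^ (2:ℝ) = (1/η)^(2:ℕ) by rw [← Real.rpow_natCast]; norm_num]
  field_simp
end density

section coords
open Set
variable {d : ℕ} {η : ℝ}

lemma expoProd_map_eval (hη : 0 < η) (i : Fin d) :
    (expoProd d η).map (Function.eval i) = expoMeasure η := by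
  have := expoMeasure_prob hη
  apply Measure.ext
  intro s hs
  rw [Measure.map_apply (measurable_pi_apply i) hs]
  have hpre : Function.eval i ⁻¹' s =
      Set.pi Set.univ (Function.update (fun _ : Fin d => (Set.univ : Set ℝ)) i s) := by
    ext σ
    simp only [Set.mem_preimage, Set.mem_pi, Set.mem_univ, forall_true_left]
    constructor
    · intro h j
      rcases eq_or_ne j i with rfl | hj
      · simpa [Function.update_self] using h
      · simp [Function.update_of_ne hj]
    · intro h
      have := h i
      simpa [Function.update_self] using this
  rw [hpre, expoProd, Measure.pi_pi]
  rw [Finset.prod_eq_single i]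
  · simp [Function.update_self]
  · intro j _ hj
    simp [Function.update_of_ne hj]
  · simp

lemma integrable_abs_coord (hη : 0 < η) (i : Fin d) :
    Integrable (fun σ : Fin d → ℝ => |σ i|) (expoProd d η) := by
  have h := integrable_abs_expoMeasure hη
  rw [← expoProd_map_eval hη i] at h
  rw [integrable_map_measure h.aestronglyMeasurable (measurable_pi_apply i).aemeasurable] at h
  exact h

lemma integral_abs_coord (hη : 0 < η) (i : Fin d) :
    ∫ σ : Fin d → ℝ, |σ i| ∂(expoProd d η) = 1 / η := by
  rw [← integral_abs_expoMeasure hη, ← expoProd_map_eval hη i,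
    integral_map (measurable_pi_apply i).aemeasurable]
  have h := integrable_abs_expoMeasure hη
  rw [← expoProd_map_eval hη i] at h
  exact h.aestronglyMeasurable

lemma integrable_l1 (hη : 0 < η) : Integrable (fun σ : Fin d → ℝ => l1 σ) (expoProd d η) := by
  unfold l1
  exact integrable_finset_sum _ (fun i _ => integrable_abs_coord hη i)

lemma integral_l1 (hη : 0 < η) : ∫ σ : Fin d → ℝ, l1 σ ∂(expoProd d η) = d / η := by
  unfold l1
  rw [integral_finset_sum _ (fun i _ => integrable_abs_coord hη i)]
  simp [integral_abs_coord hη, div_eq_mul_inv]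

section pointwise
open Finset

lemma l1_sub_comm {d : ℕ} (x y : Fin d → ℝ) : l1 (x - y) = l1 (y - x) := by
  unfold l1
  congr 1
  funext i
  simp [abs_sub_comm]

lemma l1_nonneg {d : ℕ} (x : Fin d → ℝ) : 0 ≤ l1 x :=
  Finset.sum_nonneg fun i _ => abs_nonneg _

lemma pointwise_bound {d : ℕ} (T : ℕ) (hT : 1 ≤ T) (X : Set (Fin d → ℝ))
    (D : ℝ) (hdiam : ∀ x ∈ X, ∀ y ∈ X, ∀ i, |x i - y i| ≤ D)
    (α β : ℝ)
    (f g : ℕ → (Fin d → ℝ) → ℝ) (L : ℕ → ℝ)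
    (hfg : ∀ t < T, ∀ x ∈ X, ∀ y ∈ X,
      |(g t x - f t x) - (g t y - f t y)| ≤ L t * l1 (x - y))
    (σ : Fin d → ℝ)
    (xσ : ℕ → Fin d → ℝ) (hxX : ∀ t < T, xσ t ∈ X)
    (hmin : ∀ t < T, ∀ y ∈ X,
      (∑ i ∈ range t, f i (xσ t)) + g t (xσ t) - dotp σ (xσ t) ≤
        (∑ i ∈ range t, f i y) + g t y - dotp σ y + (α + β * l1 σ))
    (xbσ : ℕ → Fin d → ℝ) (hxbX : ∀ t < T, xbσ (t + 1) ∈ X)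
    (hxbmin : ∀ t < T, ∀ z ∈ X,
      (∑ i ∈ range (t + 1), f i (xbσ (t + 1))) - dotp σ (xbσ (t + 1)) ≤
        (∑ i ∈ range (t + 1), f i z) - dotp σ z)
    (xs : Fin d → ℝ) (hxs : xs ∈ X) :
    (∑ t ∈ range T, f t (xσ t)) - (∑ t ∈ range T, f t xs) ≤
      (∑ t ∈ range T, L t * l1 (xσ t - xbσ (t + 1))) + (β * T + D) * l1 σ + α * T := by
  set M : ℕ → ℝ := fun t => (∑ i ∈ range (t + 1), f i (xbσ (t + 1))) - dotp σ (xbσ (t + 1))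
    with hM
  -- key per-round inequality
  have key : ∀ t < T, (∑ i ∈ range (t + 1), f i (xσ t)) - dotp σ (xσ t) ≤
      M t + L t * l1 (xσ t - xbσ (t + 1)) + (α + β * l1 σ) := by
    intro t ht
    have hb := hxbX t ht
    have h1 := hmin t ht (xbσ (t + 1)) hb
    have h2 := hfg t ht (xbσ (t + 1)) hb (xσ t) (hxX t ht)
    rw [abs_le] at h2
    have h3 : (g t (xbσ (t+1)) - f t (xbσ (t+1))) - (g t (xσ t) - f t (xσ t)) ≤
        L t * l1 (xσ t - xbσ (t + 1)) := by
      rw [l1_sub_comm]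
      exact h2.2
    have hMt : M t = (∑ i ∈ range t, f i (xbσ (t + 1))) + f t (xbσ (t + 1)) -
        dotp σ (xbσ (t + 1)) := by
      simp only [hM, Finset.sum_range_succ]
    rw [Finset.sum_range_succ, hMt]
    linarith
  -- telescoping induction
  have ind : ∀ m : ℕ, m + 1 ≤ T →
      (∑ t ∈ range (m + 1), f t (xσ t)) ≤
        M m + dotp σ (xσ 0) + (∑ t ∈ range (m + 1), L t * l1 (xσ t - xbσ (t + 1))) +
          ((m : ℝ) + 1) * (α + β * l1 σ) := by
    intro m
    induction m with
    | zero =>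
      intro h1
      have hk := key 0 h1
      simp only [zero_add, Finset.sum_range_one, Nat.cast_zero] at *
      linarith
    | succ m ih =>
      intro h2
      have hm1T : m + 1 < T := by omega
      have ihh := ih (by omega)
      have hkey := key (m + 1) hm1T
      rw [Finset.sum_range_succ] at hkey
      have hlow : M m ≤ (∑ i ∈ range (m + 1), f i (xσ (m + 1))) - dotp σ (xσ (m + 1)) :=
        hxbmin m (by omega) (xσ (m + 1)) (hxX (m + 1) hm1T)
      have hLsum : (∑ t ∈ range (m + 1 + 1), L t * l1 (xσ t - xbσ (t + 1))) =
          (∑ t ∈ range (m + 1), L t * l1 (xσ t - xbσ (t + 1))) +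
            L (m + 1) * l1 (xσ (m + 1) - xbσ (m + 1 + 1)) := Finset.sum_range_succ _ _
      have hfsum : (∑ t ∈ range (m + 1 + 1), f t (xσ t)) =
          (∑ t ∈ range (m + 1), f t (xσ t)) + f (m + 1) (xσ (m + 1)) := Finset.sum_range_succ _ _
      rw [hfsum, hLsum]
      push_cast
      linarith
  have hfin := ind (T - 1) (by omega)
  have hTT : T - 1 + 1 = T := by omega
  rw [hTT] at hfin
  have hMTdef : M (T - 1) = (∑ i ∈ range T, f i (xbσ T)) - dotp σ (xbσ T) := by
    simp only [hM]
    rw [hTT]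
  have hMT : M (T - 1) ≤ (∑ i ∈ range T, f i xs) - dotp σ xs := by
    rw [hMTdef]
    have := hxbmin (T - 1) (by omega) xs hxs
    rw [hTT] at this
    exact this
  have hdot : dotp σ (xσ 0) - dotp σ xs ≤ D * l1 σ := by
    unfold dotp l1
    rw [← Finset.sum_sub_distrib, Finset.mul_sum]
    apply Finset.sum_le_sum
    intro i _
    have h1 : σ i * xσ 0 i - σ i * xs i = σ i * (xσ 0 i - xs i) := by ring
    rw [h1]
    calc σ i * (xσ 0 i - xs i) ≤ |σ i * (xσ 0 i - xs i)| := le_abs_self _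
      _ = |σ i| * |xσ 0 i - xs i| := abs_mul _ _
      _ ≤ |σ i| * D := by
          apply mul_le_mul_of_nonneg_left _ (abs_nonneg _)
          exact hdiam (xσ 0) (hxX 0 (by omega)) xs hxs i
      _ = D * |σ i| := mul_comm _ _
  have hcast : ((T - 1 : ℕ) : ℝ) + 1 = (T : ℝ) := by
    rw [← Nat.cast_one (R := ℝ), ← Nat.cast_add, hTT]
  rw [hcast] at hfin
  linarith
end pointwise

section main
open Finset

lemma measurable_l1 {d : ℕ} : Measurable (l1 : (Fin d → ℝ) → ℝ) := by
  unfold l1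
  exact Finset.measurable_sum _ fun i _ => (measurable_pi_apply i).abs


/-- **Lemma 4 (regret-to-stability for Optimistic FTPL).** Rounds are indexed `0, …, T-1`,
and `g 0 = 0`; `x t σ` is an `(α,β)`-approximate minimizer over `X` of
`∑_{i < t} f i (·) + g t (·) - ⟨σ,·⟩`, and `xb (t+1) σ` exactly minimizes
`∑_{i ≤ t} f i (·) - ⟨σ,·⟩` over `X`. The expected regret is at most
`∑ₜ Lₜ E‖x t - xb (t+1)‖₁ + d(βT + D)/η + αT`, where `g t - f t` is `Lₜ`-Lipschitz. -/
theorem oftpl_regret_le_stability (d T : ℕ) (hd : 1 ≤ d) (hT : 1 ≤ T)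
    (X : Set (Fin d → ℝ)) (hX : X.Nonempty)
    (D : ℝ) (hdiam : ∀ x ∈ X, ∀ y ∈ X, ∀ i, |x i - y i| ≤ D)
    (α β η : ℝ) (hα : 0 ≤ α) (hβ : 0 ≤ β) (hη : 0 < η)
    (f g : ℕ → (Fin d → ℝ) → ℝ) (L : ℕ → ℝ) (hg0 : g 0 = 0)
    (hfg : ∀ t < T, ∀ x ∈ X, ∀ y ∈ X,
      |(g t x - f t x) - (g t y - f t y)| ≤ L t * l1 (x - y))
    (x : ℕ → (Fin d → ℝ) → (Fin d → ℝ))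
    (hmeas : ∀ t < T, Measurable (x t))
    (hmin : ∀ᵐ σ ∂(expoProd d η), ∀ t < T, x t σ ∈ X ∧
      ∀ y ∈ X,
        (∑ i ∈ Finset.range t, f i (x t σ)) + g t (x t σ) - dotp σ (x t σ) ≤
          (∑ i ∈ Finset.range t, f i y) + g t y - dotp σ y + (α + β * l1 σ))
    (xb : ℕ → (Fin d → ℝ) → (Fin d → ℝ))
    (hxbmeas : ∀ t < T, Measurable (xb (t + 1)))
    (hxbmin : ∀ t < T, ∀ σ : Fin d → ℝ, xb (t + 1) σ ∈ X ∧
      ∀ z ∈ X,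
        (∑ i ∈ Finset.range (t + 1), f i (xb (t + 1) σ)) - dotp σ (xb (t + 1) σ) ≤
          (∑ i ∈ Finset.range (t + 1), f i z) - dotp σ z) :
    (∫ σ, ((∑ t ∈ Finset.range T, f t (x t σ)) -
          sInf ((fun y => ∑ t ∈ Finset.range T, f t y) '' X)) ∂(expoProd d η)) ≤
      (∑ t ∈ Finset.range T, L t * ∫ σ, l1 (x t σ - xb (t + 1) σ) ∂(expoProd d η)) +
        d * (β * T + D) / η + α * T := by
  haveI hprob : IsProbabilityMeasure (expoProd d η) := expoProd_prob hη
  obtain ⟨c, hc⟩ := hX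
  have hD : 0 ≤ D := by
    have := hdiam c hc c hc ⟨0, hd⟩
    simpa using this
  set S : Set ℝ := (fun y => ∑ t ∈ Finset.range T, f t y) '' X with hS
  have hSne : S.Nonempty := ⟨_, ⟨c, hc, rfl⟩⟩
  set G : (Fin d → ℝ) → ℝ := fun σ =>
    (∑ t ∈ Finset.range T, L t * l1 (x t σ - xb (t + 1) σ)) + (β * T + D) * l1 σ + α * T
    with hG
  -- a.e. pointwise bound
  have hae : ∀ᵐ σ ∂(expoProd d η),
      (∑ t ∈ Finset.range T, f t (x t σ)) - sInf S ≤ G σ := by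
    filter_upwards [hmin] with σ hσ
    have hlb : (∑ t ∈ Finset.range T, f t (x t σ)) - G σ ≤ sInf S := by
      apply le_csInf hSne
      rintro b ⟨xs, hxsX, rfl⟩
      have := pointwise_bound T hT X D hdiam α β f g L hfg σ
        (fun t => x t σ) (fun t ht => (hσ t ht).1) (fun t ht => (hσ t ht).2)
        (fun t => xb t σ) (fun t ht => (hxbmin t ht σ).1) (fun t ht => (hxbmin t ht σ).2)
        xs hxsX
      simp only [hG]
      linarith
    linarith
  -- integrability of the l1-stability terms
  have hl1meas : ∀ t < T, Measurable (fun σ => l1 (x t σ - xb (t + 1) σ)) := by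
    intro t ht
    exact measurable_l1.comp ((hmeas t ht).sub (hxbmeas t ht))
  have hl1int : ∀ t < T, Integrable (fun σ => l1 (x t σ - xb (t + 1) σ)) (expoProd d η) := by
    intro t ht
    apply Integrable.mono' (integrable_const ((d : ℝ) * D)) (hl1meas t ht).aestronglyMeasurable
    filter_upwards [hmin] with σ hσ
    rw [Real.norm_eq_abs, abs_of_nonneg (l1_nonneg _)]
    unfold l1
    calc ∑ i, |(x t σ - xb (t + 1) σ) i| ≤ ∑ _i : Fin d, D := by
          apply Finset.sum_le_sum
          intro i _
          exact hdiam (x t σ) ((hσ t ht).1) (xb (t + 1) σ) ((hxbmin t ht σ).1) i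
      _ = (d : ℝ) * D := by simp [Finset.sum_const, mul_comm]
  have hAint : Integrable (fun σ => ∑ t ∈ Finset.range T,
      L t * l1 (x t σ - xb (t + 1) σ)) (expoProd d η) :=
    integrable_finset_sum _ fun t ht => ((hl1int t (Finset.mem_range.mp ht)).const_mul (L t))
  have hBint : Integrable (fun σ => (β * T + D) * l1 σ) (expoProd d η) :=
    (integrable_l1 hη).const_mul _
  have hGint : Integrable G (expoProd d η) := by
    rw [hG]
    exact (hAint.add hBint).add (integrable_const _)
  have hABint : Integrable (fun σ => (∑ t ∈ Finset.range T, L t * l1 (x t σ - xb (t + 1) σ)) +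
      (β * T + D) * l1 σ) (expoProd d η) := hAint.add hBint
  have hGval : ∫ σ, G σ ∂(expoProd d η) =
      (∑ t ∈ Finset.range T, L t * ∫ σ, l1 (x t σ - xb (t + 1) σ) ∂(expoProd d η)) +
        (β * T + D) * ((d : ℝ) / η) + α * T := by
    have e1 : ∫ σ, ((∑ t ∈ Finset.range T, L t * l1 (x t σ - xb (t + 1) σ)) +
        (β * T + D) * l1 σ + α * T) ∂(expoProd d η) =
        (∫ σ, ((∑ t ∈ Finset.range T, L t * l1 (x t σ - xb (t + 1) σ)) +
          (β * T + D) * l1 σ) ∂(expoProd d η)) + ∫ _σ, (α * T : ℝ) ∂(expoProd d η) :=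
      integral_add hABint (integrable_const _)
    have e2 : ∫ σ, ((∑ t ∈ Finset.range T, L t * l1 (x t σ - xb (t + 1) σ)) +
        (β * T + D) * l1 σ) ∂(expoProd d η) =
        (∫ σ, (∑ t ∈ Finset.range T, L t * l1 (x t σ - xb (t + 1) σ)) ∂(expoProd d η)) +
          ∫ σ, (β * T + D) * l1 σ ∂(expoProd d η) := integral_add hAint hBint
    have e3 : ∫ σ, (∑ t ∈ Finset.range T, L t * l1 (x t σ - xb (t + 1) σ)) ∂(expoProd d η) =
        ∑ t ∈ Finset.range T, L t * ∫ σ, l1 (x t σ - xb (t + 1) σ) ∂(expoProd d η) := by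
      rw [integral_finset_sum _ fun t ht =>
        ((hl1int t (Finset.mem_range.mp ht)).const_mul (L t))]
      exact Finset.sum_congr rfl fun t _ => integral_const_mul _ _
    have e4 : ∫ σ, (β * T + D) * l1 σ ∂(expoProd d η) = (β * T + D) * ((d : ℝ) / η) := by
      rw [integral_const_mul, integral_l1 hη]
    have e5 : ∫ _σ, (α * T : ℝ) ∂(expoProd d η) = α * T := by simp
    simp only [hG]
    rw [e1, e2, e3, e4, e5]
  by_cases hint : Integrable (fun σ => (∑ t ∈ Finset.range T, f t (x t σ)) - sInf S)
      (expoProd d η)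
  · calc ∫ σ, ((∑ t ∈ Finset.range T, f t (x t σ)) - sInf S) ∂(expoProd d η)
        ≤ ∫ σ, G σ ∂(expoProd d η) := integral_mono_ae hint hGint hae
      _ = (∑ t ∈ Finset.range T, L t * ∫ σ, l1 (x t σ - xb (t + 1) σ) ∂(expoProd d η)) +
            (β * T + D) * ((d : ℝ) / η) + α * T := hGval
      _ ≤ _ := by
          have : (β * (T : ℝ) + D) * ((d : ℝ) / η) = (d : ℝ) * (β * T + D) / η := by
            ring
          rw [this]
  · rw [integral_undef hint]
    have hsum_nonneg : 0 ≤ ∑ t ∈ Finset.range T,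
        L t * ∫ σ, l1 (x t σ - xb (t + 1) σ) ∂(expoProd d η) := by
      apply Finset.sum_nonneg
      intro t ht
      have ht' := Finset.mem_range.mp ht
      by_cases hsing : ∀ u ∈ X, ∀ v ∈ X, u = v
      · have hzero : ∫ σ, l1 (x t σ - xb (t + 1) σ) ∂(expoProd d η) = 0 := by
          rw [integral_eq_zero_of_ae]
          filter_upwards [hmin] with σ hσ
          have : x t σ = xb (t + 1) σ :=
            hsing (x t σ) ((hσ t ht').1) (xb (t + 1) σ) ((hxbmin t ht' σ).1)
          rw [this]
          simp [l1]
        rw [hzero, mul_zero]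
      · push_neg at hsing
        obtain ⟨u, hu, v, hv, huv⟩ := hsing
        have hLpos : 0 ≤ L t := by
          have h1 := hfg t ht' u hu v hv
          have h2 : 0 < l1 (u - v) := by
            rcases lt_or_eq_of_le (l1_nonneg (u - v)) with h | h
            · exact h
            · exfalso
              apply huv
              funext i
              have : |(u - v) i| = 0 := by
                by_contra hne
                have hpos : 0 < |(u - v) i| := lt_of_le_of_ne (abs_nonneg _) (Ne.symm hne)
                have hle : |(u - v) i| ≤ l1 (u - v) :=
                  Finset.single_le_sum (f := fun j => |(u - v) j|)
                    (fun j _ => abs_nonneg _) (Finset.mem_univ i)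
                linarith [h.symm ▸ hle]
              have := abs_eq_zero.mp this
              have huvi : u i - v i = 0 := this
              linarith [huvi]
          nlinarith [abs_nonneg ((g t u - f t u) - (g t v - f t v)), h1]
        exact mul_nonneg hLpos (integral_nonneg fun σ => l1_nonneg _)
    have hconst : 0 ≤ (d : ℝ) * (β * T + D) / η := by positivity
    have hαT : 0 ≤ α * T := by positivity
    linarith
end main
end coords
end
end

section
/- Let d ≥ 1, L_t > 0, α, β ≥ 0, let X ⊆ ℝ^d, let h : X → ℝ and g : X → ℝ be arbitrary, and let f : X → ℝ be such that f − g is L_t-Lipschitz with respect to the ℓ1 norm. Let σ ∈ ℝ^d, i ∈ {1, …, d}, and σ' = σ + 100 L_t d · e_i. Suppose u(σ) and u(σ') are (α,β)-approximate minimizers over X of z ↦ h(z) + g(z) − ⟨σ, z⟩ and z ↦ h(z) + g(z) − ⟨σ', z⟩ respectively, and v(σ) and v(σ') are exact minimizers over X of z ↦ h(z) + f(z) − ⟨σ, z⟩ and z ↦ h(z) + f(z) − ⟨σ', z⟩ respectively. If ‖u(σ) − v(σ)‖_1 ≤ 10d·|u_i(σ) − v_i(σ)|, then min(u_i(σ'),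 v_i(σ')) ≥ max(u_i(σ), v_i(σ)) − (1/10)|u_i(σ) − v_i(σ)| − 3(α + β‖σ‖_1)/(100 L_t d) − β. -/
/-! Tilting an objective by `-c zᵢ` can lower coordinate `i` of an approximate minimizer only by
the sum of the two slacks divided by `c`. Since `f - g` is `Lₜ`-Lipschitz, `u` and `v` are both
`(ε + Lₜ‖u - v‖₁)`-approximate minimizers of each of `h + g - ⟨σ,·⟩` and `h + f - ⟨σ,·⟩`, where
`ε = α + β‖σ‖₁`. Comparing each of them with `u'` and `v'` therefore costs at most
`2ε + βc + Lₜ‖u - v‖₁` with `c = 100 Lₜ d`, and the stability hypothesis bounds the last term by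
`c |uᵢ - vᵢ| / 10`. -/

open MeasureTheory

noncomputable section

/-- The `i`-th standard basis vector of `ℝ^d`. -/
def stdBasis {d : ℕ} (i : Fin d) : Fin d → ℝ := Pi.single i 1

def IsApproxMinOn {E : Type*} (φ : E → ℝ) (X : Set E) (δ : ℝ) (x : E) : Prop :=
  ∀ z ∈ X, φ x ≤ φ z + δ

namespace IsApproxMinOn

variable {E : Type*} {φ ψ ℓ : E → ℝ} {X : Set E} {δ δ' ε ε' K : ℝ} {x y u v u' v' : E}

theorem _root_.IsMinOn.isApproxMinOn (hx : IsMinOn φ X x) : IsApproxMinOn φ X 0 x :=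
  fun z hz ↦ by simpa using isMinOn_iff.mp hx z hz

theorem nonneg (hx : IsApproxMinOn φ X δ x) (hxX : x ∈ X) : 0 ≤ δ := by
  linarith [hx x hxX]

theorem mono (hx : IsApproxMinOn φ X δ x) (hδ : δ ≤ δ') : IsApproxMinOn φ X δ' x :=
  fun z hz ↦ (hx z hz).trans (by linarith)

theorem of_sub_le (hx : IsApproxMinOn φ X δ x) (hy : IsApproxMinOn ψ X δ' y) (hxX : x ∈ X)
    (hK : (φ y - ψ y) - (φ x - ψ x) ≤ K) : IsApproxMinOn φ X (δ + δ' + K) y := by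
  intro z hz
  linarith [hx z hz, hy x hxX]

theorem sub_le_of_tilt (hx : IsApproxMinOn φ X δ x) (hy : IsApproxMinOn (φ - ℓ) X δ' y)
    (hxX : x ∈ X) (hyX : y ∈ X) : ℓ x ≤ ℓ y + (δ + δ') := by
  have := hy x hxX
  simp only [Pi.sub_apply] at this
  linarith [hx y hyX]

theorem max_le_min_add_of_tilt (hu : IsApproxMinOn φ X ε u) (hv : IsApproxMinOn ψ X 0 v)
    (hu' : IsApproxMinOn (φ - ℓ) X ε' u') (hv' : IsApproxMinOn (ψ - ℓ) X 0 v')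
    (huX : u ∈ X) (hvX : v ∈ X) (hu'X : u' ∈ X) (hv'X : v' ∈ X)
    (hK : |(ψ u - φ u) - (ψ v - φ v)| ≤ K) :
    max (ℓ u) (ℓ v) ≤ min (ℓ u') (ℓ v') + (ε + ε' + K) := by
  obtain ⟨hK₁, hK₂⟩ := abs_le.mp hK
  have hv₁ : IsApproxMinOn φ X (ε + 0 + K) v := hu.of_sub_le hv huX (by linarith)
  have hu₁ : IsApproxMinOn ψ X (0 + ε + K) u := hv.of_sub_le hu hvX (by linarith)
  have hε := hu.nonneg huX
  have hε' := hu'.nonneg hu'X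
  rw [← min_add_add_right]
  refine max_le (le_min ?_ ?_) (le_min ?_ ?_)
  · exact (hu.sub_le_of_tilt hu' huX hu'X).trans (by linarith)
  · exact (hu₁.sub_le_of_tilt hv' huX hv'X).trans (by linarith)
  · exact (hv₁.sub_le_of_tilt hu' hvX hu'X).trans (by linarith)
  · exact (hv.sub_le_of_tilt hv' hvX hv'X).trans (by linarith)

end IsApproxMinOn

theorem dotp_add_smul_stdBasis {d : ℕ} (σ z : Fin d → ℝ) (c : ℝ) (i : Fin d) :
    dotp (σ + c • stdBasis i) z = dotp σ z + c * z i := by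
  simp [dotp, stdBasis, add_mul, Finset.sum_add_distrib, Pi.single_apply]

theorem sub_dotp_add_smul_stdBasis {d : ℕ} (F : (Fin d → ℝ) → ℝ) (σ : Fin d → ℝ) (c : ℝ)
    (i : Fin d) :
    (fun z ↦ F z - dotp (σ + c • stdBasis i) z) = (fun z ↦ F z - dotp σ z) - fun z ↦ c * z i := by
  ext z
  simp only [dotp_add_smul_stdBasis, Pi.sub_apply]
  ring

theorem l1_add_le {d : ℕ} (x y : Fin d → ℝ) : l1 (x + y) ≤ l1 x + l1 y := by
  rw [l1, l1, l1, ← Finset.sum_add_distrib]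
  exact Finset.sum_le_sum fun j _ ↦ abs_add_le (x j) (y j)

theorem l1_smul_stdBasis {d : ℕ} (c : ℝ) (i : Fin d) : l1 (c • stdBasis i) = |c| := by
  simp [l1, stdBasis, Pi.single_apply, apply_ite]

theorem l1_add_smul_stdBasis_le {d : ℕ} (σ : Fin d → ℝ) (c : ℝ) (i : Fin d) :
    l1 (σ + c • stdBasis i) ≤ l1 σ + |c| :=
  (l1_add_le _ _).trans_eq (by rw [l1_smul_stdBasis])

theorem oftpl_monotonicity_two_general {d : ℕ} (Lt : ℝ) (hLt : 0 < Lt)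
    (α β : ℝ) (hβ : 0 ≤ β)
    (X : Set (Fin d → ℝ)) (h g f : (Fin d → ℝ) → ℝ)
    (hfg : ∀ x ∈ X, ∀ y ∈ X, |(f x - g x) - (f y - g y)| ≤ Lt * l1 (x - y))
    (σ : Fin d → ℝ) (i : Fin d)
    (u u' v v' : Fin d → ℝ)
    (huX : u ∈ X) (hu'X : u' ∈ X) (hvX : v ∈ X) (hv'X : v' ∈ X)
    (hu : ∀ z ∈ X, h u + g u - dotp σ u ≤ h z + g z - dotp σ z + (α + β * l1 σ))
    (hu' : ∀ z ∈ X,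
      h u' + g u' - dotp (σ + (100 * Lt * d) • stdBasis i) u' ≤
        h z + g z - dotp (σ + (100 * Lt * d) • stdBasis i) z
          + (α + β * l1 (σ + (100 * Lt * d) • stdBasis i)))
    (hv : ∀ z ∈ X, h v + f v - dotp σ v ≤ h z + f z - dotp σ z)
    (hv' : ∀ z ∈ X,
      h v' + f v' - dotp (σ + (100 * Lt * d) • stdBasis i) v' ≤
        h z + f z - dotp (σ + (100 * Lt * d) • stdBasis i) z)
    (hstab : l1 (u - v) ≤ 10 * d * |u i - v i|) :
    min (u' i) (v' i) ≥
      max (u i) (v i) - (1 / 10) * |u i - v i| - 3 * (α + β * l1 σ) / (100 * Lt * d) - β := by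
  set M : ℝ := 100 * Lt * d
  set ε : ℝ := α + β * l1 σ
  set Φg : (Fin d → ℝ) → ℝ := fun z ↦ h z + g z - dotp σ z
  set Φf : (Fin d → ℝ) → ℝ := fun z ↦ h z + f z - dotp σ z
  have hM : 0 < M := by have := i.pos; positivity
  have hu'₀ : IsApproxMinOn (Φg - fun z ↦ M * z i) X (ε + β * M) u' := by
    have hu'₁ : IsApproxMinOn (fun z ↦ h z + g z - dotp (σ + M • stdBasis i) z) X
        (α + β * l1 (σ + M • stdBasis i)) u' := hu'
    rw [sub_dotp_add_smul_stdBasis] at hu'₁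
    refine hu'₁.mono ?_
    have := mul_le_mul_of_nonneg_left (l1_add_smul_stdBasis_le σ M i) hβ
    rw [abs_of_pos hM] at this
    linarith
  have hv'₀ : IsApproxMinOn (Φf - fun z ↦ M * z i) X 0 v' := by
    have hv'₁ : IsMinOn (fun z ↦ h z + f z - dotp (σ + M • stdBasis i) z) X v' :=
      isMinOn_iff.mpr hv'
    rw [sub_dotp_add_smul_stdBasis] at hv'₁
    exact hv'₁.isApproxMinOn
  have hu₀ : IsApproxMinOn Φg X ε u := hu
  have hK : |(Φf u - Φg u) - (Φf v - Φg v)| ≤ Lt * l1 (u - v) := by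
    convert hfg u huX v hvX using 2
    simp only [Φf, Φg]
    ring
  have hbound := hu₀.max_le_min_add_of_tilt (isMinOn_iff.mpr hv).isApproxMinOn hu'₀ hv'₀
    huX hvX hu'X hv'X hK
  rw [← mul_max_of_nonneg _ _ hM.le, ← mul_min_of_nonneg _ _ hM.le] at hbound
  have hε : 0 ≤ ε := hu₀.nonneg huX
  have hKM := mul_le_mul_of_nonneg_left hstab hLt.le
  suffices max (u i) (v i) ≤ min (u' i) (v' i) + ((1 / 10) * |u i - v i| + 3 * ε / M + β) by
    linarith
  refine le_of_mul_le_mul_left ?_ hM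
  rw [mul_add, mul_add, mul_add, mul_div_cancel₀ _ hM.ne']
  linarith

/-- **Monotonicity 2 for Optimistic FTPL.** Here `u` plays the role of `x_t` (an
`(α,β)`-approximate minimizer of `h + g - ⟨σ,·⟩`, where `g` is the guess) and `v` the
role of `x̄_{t+1}` (an exact minimizer of `h + f - ⟨σ,·⟩`), for perturbations `σ` and
`σ' = σ + 100 Lₜ d eᵢ`, where `f - g` is `Lₜ`-Lipschitz w.r.t. the ℓ1 norm. -/
theorem oftpl_monotonicity_two {d : ℕ} (hd : 1 ≤ d) (Lt : ℝ) (hLt : 0 < Lt)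
    (α β : ℝ) (hα : 0 ≤ α) (hβ : 0 ≤ β)
    (X : Set (Fin d → ℝ)) (h g f : (Fin d → ℝ) → ℝ)
    (hfg : ∀ x ∈ X, ∀ y ∈ X, |(f x - g x) - (f y - g y)| ≤ Lt * l1 (x - y))
    (σ : Fin d → ℝ) (i : Fin d)
    (u u' v v' : Fin d → ℝ)
    (huX : u ∈ X) (hu'X : u' ∈ X) (hvX : v ∈ X) (hv'X : v' ∈ X)
    (hu : ∀ z ∈ X, h u + g u - dotp σ u ≤ h z + g z - dotp σ z + (α + β * l1 σ))
    (hu' : ∀ z ∈ X,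
      h u' + g u' - dotp (σ + (100 * Lt * d) • stdBasis i) u' ≤
        h z + g z - dotp (σ + (100 * Lt * d) • stdBasis i) z
          + (α + β * l1 (σ + (100 * Lt * d) • stdBasis i)))
    (hv : ∀ z ∈ X, h v + f v - dotp σ v ≤ h z + f z - dotp σ z)
    (hv' : ∀ z ∈ X,
      h v' + f v' - dotp (σ + (100 * Lt * d) • stdBasis i) v' ≤
        h z + f z - dotp (σ + (100 * Lt * d) • stdBasis i) z)
    (hstab : l1 (u - v) ≤ 10 * d * |u i - v i|) :
    min (u' i) (v' i) ≥
      max (u i) (v i) - (1 / 10) * |u i - v i| - 3 * (α + β * l1 σ) / (100 * Lt * d) - β :=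
  oftpl_monotonicity_two_general Lt hLt α β hβ X h g f hfg σ i u u' v v' huX hu'X hvX hv'X hu hu' hv
    hv' hstab
end
end
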